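/- For every integer n ≥ 0 and every integer k ≥ 1, (-1)^{k-1} ( Σ_{j=1}^{k} (-1)^{j-1} p(n - 3j(j+1)/2) - ge(n) ) ≥ 0, with strict inequality if n ≥ 3(k+1)(k+2)/2, where ge(n) counts partitions of n with rank at most -2. -/

import Mathlib

open PowerSeries Finset

noncomputable instance : TopologicalSpace (PowerSeries ℚ) :=
  inferInstanceAs (TopologicalSpace ((Unit →₀ ℕ) → ℚ))

/-- The rank of a partition: largest part minus number of parts. -/
def rank {n : ℕ} (P : n.Partition) : ℤ :=
  (P.parts.sup : ℤ) - (Multiset.card P.parts : ℤ)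

/-- The crank of a partition. -/
def crank {n : ℕ} (P : n.Partition) : ℤ :=
  if P.parts.count 1 = 0 then (P.parts.sup : ℤ)
  else ((P.parts.filter (fun x => P.parts.count 1 < x)).card : ℤ) - (P.parts.count 1 : ℤ)

/-- The number of partitions of `n`. -/
noncomputable def p (n : ℕ) : ℕ := Nat.card n.Partition

/-- `p` extended to the integers by `0` on negatives. -/
noncomputable def pz (m : ℤ) : ℕ := if 0 ≤ m then p m.toNat else 0

/-- The number of partitions of `n` with non-negative rank. -/
noncomputable def Nrank (n : ℕ) : ℕ := Nat.card {P : n.Partition // 0 ≤ rank P}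

/-- The number of partitions of `n` with positive rank. -/
noncomputable def Rrank (n : ℕ) : ℕ := Nat.card {P : n.Partition // 0 < rank P}

/-- The number of Garden of Eden partitions of `n` (rank at most `-2`). -/
noncomputable def gePart (n : ℕ) : ℕ := Nat.card {P : n.Partition // rank P ≤ -2}

/-- The number of partitions of `n` with non-negative crank. -/
noncomputable def Ccrank (n : ℕ) : ℕ := Nat.card {P : n.Partition // 0 ≤ crank P}

/-- The number of partitions of `n` with positive crank. -/
noncomputable def Dcrank (n : ℕ) : ℕ := Nat.card {P : n.Partition // 0 < crank P}

/-- The number of partitions of `n` in which `k` is the least positive integer that is not a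
part and there are more parts greater than `k` than parts less than `k`. -/
noncomputable def Mk (k n : ℕ) : ℕ := Nat.card {P : n.Partition //
  (∀ i, 1 ≤ i → i < k → (i : ℕ) ∈ P.parts) ∧ (k : ℕ) ∉ P.parts ∧
  (P.parts.filter (fun x => x < k)).card < (P.parts.filter (fun x => k < x)).card}

/-- The number of partitions of `n` with no part divisible by 3. -/
noncomputable def p3 (n : ℕ) : ℕ := Nat.card {P : n.Partition // ∀ x ∈ P.parts, ¬ (3 ∣ x)}

/-- The infinite product `(q;q)_∞` as a formal power series. -/
noncomputable def E : PowerSeries ℚ := ∏' i : ℕ, (1 - (X : PowerSeries ℚ) ^ (i + 1))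

/-- The finite product `(q;q)_n` as a formal power series. -/
noncomputable def qPoch (n : ℕ) : PowerSeries ℚ :=
  ∏ i ∈ range n, (1 - (X : PowerSeries ℚ) ^ (i + 1))

/-!
Dyson's map: deleting the first column of the Young diagram of a partition of `N + m + 1` with
rank `≤ -m` and inserting a part `#parts - (m + 1)` is a bijection onto the partitions of `N`
with rank `≥ -(m + 2)`. Hence `N(≤ -m, N + m + 1) + N(≤ -(m + 3), N) = p(N)`, where
`N(≤ -m, n)` counts the partitions of `n` with rank `≤ -m`. Starting from `ge(n) = N(≤ -2, n)`
and applying this with `m = 2, 5, 8, …` telescopes: the alternating sum minus `ge(n)` equals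
`(-1)^(k+1) N(≤ -(3k+2), n - 3k(k+1)/2)`, which is positive once `n - 3k(k+1)/2 ≥ 3k + 3`
(the partition into ones has rank `≤ -(3k+2)`).
-/

open Multiset

namespace Multiset

section LinearOrder

variable {α : Type*} [LinearOrder α] [OrderBot α]

theorem sup_mem_of_ne_zero {s : Multiset α} (h : s ≠ 0) : s.sup ∈ s := by
  induction s using Multiset.induction with
  | empty => exact absurd rfl h
  | cons a t ih =>
    rw [sup_cons]
    rcases eq_or_ne t 0 with rfl | ht
    · simp
    rcases le_total a t.sup with hle | hle
    · rw [sup_eq_right.mpr hle]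
      exact mem_cons_of_mem (ih ht)
    · rw [sup_eq_left.mpr hle]
      exact mem_cons_self a t

theorem card_erase_sup (s : Multiset α) : card (s.erase s.sup) = card s - 1 := by
  rcases eq_or_ne s 0 with rfl | h
  · simp
  · rw [card_erase_of_mem (sup_mem_of_ne_zero h), Nat.pred_eq_sub_one]

end LinearOrder

theorem sup_add_sum_erase_sup (s : Multiset ℕ) : s.sup + (s.erase s.sup).sum = s.sum := by
  rcases eq_or_ne s 0 with rfl | h
  · simp
  · exact sum_erase (sup_mem_of_ne_zero h)

theorem sum_filter_pos (s : Multiset ℕ) : (s.filter (0 < ·)).sum = s.sum := by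
  have hzero : (s.filter (¬ 0 < ·)).sum = 0 :=
    sum_eq_zero fun x hx => Nat.eq_zero_of_not_pos (of_mem_filter (p := (¬ 0 < ·)) hx)
  conv_rhs => rw [← filter_add_not (0 < ·) s]
  rw [sum_add, hzero, add_zero]

theorem filter_pos_cons_sup_erase_sup {s : Multiset ℕ} (hs : ∀ x ∈ s, 0 < x) :
    (s.sup ::ₘ s.erase s.sup).filter (0 < ·) = s := by
  rcases eq_or_ne s 0 with rfl | h
  · rfl
  · rw [cons_erase (sup_mem_of_ne_zero h), filter_eq_self.mpr hs]

theorem sup_filter_pos_cons_and_erase {r : ℕ} {u : Multiset ℕ}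
    (hu : ∀ x ∈ u, 0 < x ∧ x ≤ r) :
    ((r ::ₘ u).filter (0 < ·)).sup = r ∧ ((r ::ₘ u).filter (0 < ·)).erase r = u := by
  rcases Nat.eq_zero_or_pos r with rfl | hr
  · obtain rfl : u = 0 := eq_zero_of_forall_notMem fun x hx => by have := hu x hx; omega
    exact ⟨rfl, rfl⟩
  · have hpos : ∀ x ∈ r ::ₘ u, 0 < x := forall_mem_cons.mpr ⟨hr, fun x hx => (hu x hx).1⟩
    rw [filter_eq_self.mpr hpos, sup_cons,
      sup_eq_left.mpr (sup_le.mpr fun x hx => (hu x hx).2), erase_cons_head]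
    exact ⟨rfl, rfl⟩

end Multiset

namespace Dyson

/-- For `card t ≤ L`, the partition whose Young diagram is that of `t` with a first column of
length `L` prepended. -/
def addColumn (L : ℕ) (t : Multiset ℕ) : Multiset ℕ :=
  replicate (L - card t) 1 + t.map (· + 1)

def removeColumn (s : Multiset ℕ) : Multiset ℕ :=
  (s.map (· - 1)).filter (0 < ·)

variable {L : ℕ} {s t : Multiset ℕ}

theorem pos_of_mem_addColumn {x : ℕ} (hx : x ∈ addColumn L t) : 0 < x := by
  rcases mem_add.mp hx with h | h
  · rw [eq_of_mem_replicate h]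
    exact one_pos
  · obtain ⟨y, -, rfl⟩ := mem_map.mp h
    exact y.succ_pos

theorem card_addColumn (h : card t ≤ L) : card (addColumn L t) = L := by
  simp only [addColumn, card_add, card_replicate, Multiset.card_map]
  omega

theorem sum_addColumn (h : card t ≤ L) : (addColumn L t).sum = L + t.sum := by
  simp only [addColumn, sum_add, sum_replicate, smul_eq_mul, mul_one, sum_map_add, map_id',
    map_const', sum_replicate]
  omega

theorem sup_addColumn_le : (addColumn L t).sup ≤ t.sup + 1 := by
  refine sup_le.mpr fun x hx => ?_
  rcases mem_add.mp hx with h | h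
  · rw [eq_of_mem_replicate h]
    omega
  · obtain ⟨y, hy, rfl⟩ := mem_map.mp h
    exact Nat.succ_le_succ (le_sup hy)

theorem removeColumn_addColumn (ht : ∀ x ∈ t, 0 < x) : removeColumn (addColumn L t) = t := by
  simp only [removeColumn, addColumn, map_add, map_replicate, Multiset.map_map, filter_add]
  rw [filter_eq_nil.mpr fun x hx => by simp [eq_of_mem_replicate hx], zero_add]
  simpa [Function.comp_def] using ht

theorem removeColumn_eq : removeColumn s = (s.filter (1 < ·)).map (· - 1) := by
  rw [removeColumn, filter_map]
  exact congrArg _ (filter_congr fun x _ => by simp only [Function.comp_apply]; omega)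

theorem addColumn_removeColumn (hs : ∀ x ∈ s, 0 < x) :
    addColumn (card s) (removeColumn s) = s := by
  have hbig : ((s.filter (1 < ·)).map (· - 1)).map (· + 1) = s.filter (1 < ·) := by
    rw [Multiset.map_map]
    exact (map_congr rfl fun x hx => by
      have := of_mem_filter hx
      simp only [Function.comp_apply, id_eq]
      omega).trans (map_id _)
  have hones : s.filter (¬ 1 < ·) = replicate (card (s.filter (¬ 1 < ·))) 1 :=
    eq_replicate_card.mpr fun x hx => by
      have := of_mem_filter hx
      have := hs x (mem_of_mem_filter hx)
      omega
  have hcard : card (s.filter (1 < ·)) + card (s.filter (¬ 1 < ·)) = card s := by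
    rw [← card_add, filter_add_not]
  rw [addColumn, removeColumn_eq, hbig, Multiset.card_map,
    show card s - card (s.filter (1 < ·)) = card (s.filter (¬ 1 < ·)) by omega, ← hones,
    add_comm, filter_add_not]

theorem card_removeColumn_le : card (removeColumn s) ≤ card s :=
  (Multiset.card_le_card (filter_le _ _)).trans (Multiset.card_map _ _).le

theorem sum_removeColumn (hs : ∀ x ∈ s, 0 < x) : (removeColumn s).sum + card s = s.sum := by
  conv_rhs => rw [← addColumn_removeColumn hs, sum_addColumn card_removeColumn_le]
  exact add_comm _ _

theorem le_sup_sub_one_of_mem_removeColumn {x : ℕ} (hx : x ∈ removeColumn s) :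
    0 < x ∧ x ≤ s.sup - 1 := by
  obtain ⟨y, hy, rfl⟩ := mem_map.mp (mem_of_mem_filter hx)
  exact ⟨of_mem_filter hx, Nat.sub_le_sub_right (le_sup hy) 1⟩

/-- Dyson's map: delete the first column of the diagram and insert a part `card s - (m + 1)`. -/
def shrink (m : ℕ) (s : Multiset ℕ) : Multiset ℕ :=
  ((card s - (m + 1)) ::ₘ removeColumn s).filter (0 < ·)

/-- The inverse of `shrink m`: delete the largest part and prepend a column of length
`t.sup + m + 1`. -/
def grow (m : ℕ) (t : Multiset ℕ) : Multiset ℕ :=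
  addColumn (t.sup + m + 1) (t.erase t.sup)

variable {m : ℕ}

theorem card_erase_sup_le (hc : card t ≤ t.sup + m + 2) :
    card (t.erase t.sup) ≤ t.sup + m + 1 := by
  rw [card_erase_sup]
  omega

theorem pos_of_mem_grow {x : ℕ} (hx : x ∈ grow m t) : 0 < x :=
  pos_of_mem_addColumn hx

theorem card_grow (hc : card t ≤ t.sup + m + 2) : card (grow m t) = t.sup + m + 1 :=
  card_addColumn (card_erase_sup_le hc)

theorem sum_grow (hc : card t ≤ t.sup + m + 2) : (grow m t).sum = t.sum + m + 1 := by
  rw [grow, sum_addColumn (card_erase_sup_le hc), ← sup_add_sum_erase_sup t]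
  omega

theorem sup_grow_le : (grow m t).sup ≤ t.sup + 1 :=
  sup_addColumn_le.trans (Nat.succ_le_succ (sup_mono (erase_subset _ _)))

theorem pos_of_mem_shrink {x : ℕ} (hx : x ∈ shrink m s) : 0 < x :=
  of_mem_filter hx

theorem sum_shrink (hs : ∀ x ∈ s, 0 < x) (hm : m + 1 ≤ card s) :
    (shrink m s).sum + (m + 1) = s.sum := by
  rw [shrink, sum_filter_pos, Multiset.sum_cons, ← sum_removeColumn hs]
  omega

theorem card_shrink_le : card (shrink m s) ≤ card s + 1 :=
  (Multiset.card_le_card (filter_le _ _)).trans (by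
    rw [Multiset.card_cons]
    exact Nat.succ_le_succ card_removeColumn_le)

theorem sup_shrink_and_erase (hr : s.sup + m ≤ card s) :
    (shrink m s).sup = card s - (m + 1) ∧
      (shrink m s).erase (card s - (m + 1)) = removeColumn s :=
  sup_filter_pos_cons_and_erase fun x hx => by
    have := le_sup_sub_one_of_mem_removeColumn hx
    omega

theorem shrink_grow (ht : ∀ x ∈ t, 0 < x) (hc : card t ≤ t.sup + m + 2) :
    shrink m (grow m t) = t := by
  rw [shrink, card_grow hc, grow,
    removeColumn_addColumn fun x hx => ht x (mem_of_mem_erase hx),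
    show t.sup + m + 1 - (m + 1) = t.sup by omega, filter_pos_cons_sup_erase_sup ht]

theorem grow_shrink (hs : ∀ x ∈ s, 0 < x) (hr : s.sup + m ≤ card s) (hm : m + 1 ≤ card s) :
    grow m (shrink m s) = s := by
  obtain ⟨hsup, herase⟩ := sup_shrink_and_erase hr
  rw [grow, hsup, herase, show card s - (m + 1) + m + 1 = card s by omega,
    addColumn_removeColumn hs]

end Dyson

open Dyson

theorem rank_le_neg_iff {n : ℕ} (P : n.Partition) (m : ℕ) :
    rank P ≤ -(m : ℤ) ↔ P.parts.sup + m ≤ card P.parts := by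
  rw [rank]
  omega

theorem neg_le_rank_iff {n : ℕ} (P : n.Partition) (m : ℕ) :
    -(m : ℤ) ≤ rank P ↔ card P.parts ≤ P.parts.sup + m := by
  rw [rank]
  omega

theorem one_le_sup_parts {n : ℕ} (P : n.Partition) (hn : n ≠ 0) : 1 ≤ P.parts.sup := by
  refine P.parts_pos (sup_mem_of_ne_zero fun h => hn ?_)
  rw [← P.parts_sum, h, Multiset.sum_zero]

def dysonEquiv (m N : ℕ) :
    {P : (N + m + 1).Partition // rank P ≤ -(m : ℤ)} ≃
      {Q : N.Partition // -((m + 2 : ℕ) : ℤ) ≤ rank Q} where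
  toFun P :=
    have hr := (rank_le_neg_iff P.1 m).mp P.2
    have hm : m + 1 ≤ card P.1.parts := by
      have := one_le_sup_parts P.1 (by omega)
      omega
    ⟨⟨shrink m P.1.parts, pos_of_mem_shrink, by
        have := sum_shrink (fun _ => P.1.parts_pos) hm
        rw [P.1.parts_sum] at this
        omega⟩,
      (neg_le_rank_iff _ _).mpr <| by
        have := card_shrink_le (m := m) (s := P.1.parts)
        dsimp only
        rw [(sup_shrink_and_erase hr).1]
        omega⟩
  invFun Q :=
    have hc := (neg_le_rank_iff Q.1 (m + 2)).mp Q.2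
    ⟨⟨grow m Q.1.parts, pos_of_mem_grow, by rw [sum_grow hc, Q.1.parts_sum]⟩,
      (rank_le_neg_iff _ _).mpr <| by
        have := sup_grow_le (m := m) (t := Q.1.parts)
        dsimp only
        rw [card_grow hc]
        omega⟩
  left_inv P := by
    have hr := (rank_le_neg_iff P.1 m).mp P.2
    have := one_le_sup_parts P.1 (by omega)
    exact Subtype.ext <| Nat.Partition.ext <| grow_shrink (fun _ => P.1.parts_pos) hr (by omega)
  right_inv Q := Subtype.ext <| Nat.Partition.ext <|
    shrink_grow (fun _ => Q.1.parts_pos) ((neg_le_rank_iff Q.1 (m + 2)).mp Q.2)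

noncomputable def numRankLe (m n : ℕ) : ℕ := Nat.card {P : n.Partition // rank P ≤ -(m : ℤ)}

theorem numRankLe_add_numRankLe (m N : ℕ) :
    numRankLe m (N + m + 1) + numRankLe (m + 3) N = p N := by
  have hcompl : ∀ Q : N.Partition,
      -((m + 2 : ℕ) : ℤ) ≤ rank Q ↔ ¬ rank Q ≤ -((m + 3 : ℕ) : ℤ) := fun Q => by
    push_cast
    omega
  rw [numRankLe, Nat.card_congr ((dysonEquiv m N).trans (Equiv.subtypeEquivRight hcompl)),
    p, ← Nat.card_congr (Equiv.sumCompl fun Q : N.Partition => rank Q ≤ -((m + 3 : ℕ) : ℤ)),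
    Nat.card_sum, add_comm, numRankLe]

theorem numRankLe_eq_zero {m n : ℕ} (hm : 1 ≤ m) (hn : n ≤ m) : numRankLe m n = 0 := by
  refine Nat.card_eq_zero.mpr (Or.inl ⟨fun ⟨P, hP⟩ => ?_⟩)
  rw [rank_le_neg_iff] at hP
  have hcard : card P.parts ≤ n := by
    simpa [P.parts_sum] using Multiset.card_nsmul_le_sum (a := 1) fun _ => P.parts_pos
  rcases eq_or_ne n 0 with rfl | hn0
  · omega
  · have := one_le_sup_parts P hn0
    omega

theorem numRankLe_pos {m n : ℕ} (h : m + 1 ≤ n) : 0 < numRankLe m n := by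
  have hsup : (replicate n 1).sup ≤ 1 := sup_le.mpr fun x hx => (eq_of_mem_replicate hx).le
  let ones : n.Partition :=
    ⟨replicate n 1, fun hx => by rw [eq_of_mem_replicate hx]; exact one_pos, by simp⟩
  have : Nonempty {P : n.Partition // rank P ≤ -(m : ℤ)} :=
    ⟨⟨ones, (rank_le_neg_iff ones m).mpr (by simp only [ones, card_replicate]; omega)⟩⟩
  exact Nat.card_pos

noncomputable def numRankLeZ (m : ℕ) (t : ℤ) : ℕ := if 0 ≤ t then numRankLe m t.toNat else 0

theorem gePart_eq_numRankLeZ (n : ℕ) : gePart n = numRankLeZ 2 n := by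
  rw [numRankLeZ, if_pos n.cast_nonneg, Int.toNat_natCast, numRankLe, gePart]
  rfl

theorem numRankLeZ_eq_pz_sub {m : ℕ} (hm : 1 ≤ m) (t : ℤ) :
    (numRankLeZ m t : ℤ) = pz (t - (m + 1)) - numRankLeZ (m + 3) (t - (m + 1)) := by
  by_cases ht : 0 ≤ t - (m + 1)
  · have := numRankLe_add_numRankLe m (t - (m + 1)).toNat
    rw [numRankLeZ, if_pos (by omega), numRankLeZ, if_pos ht, pz, if_pos ht,
      show t.toNat = (t - (m + 1)).toNat + m + 1 by omega]
    omega
  · rw [numRankLeZ, numRankLeZ, pz, if_neg ht, if_neg ht]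
    split_ifs with ht'
    · rw [numRankLe_eq_zero hm (by omega)]
      rfl
    · rfl

theorem numRankLeZ_pos {m : ℕ} {t : ℤ} (h : m + 1 ≤ t) : 0 < numRankLeZ m t := by
  rw [numRankLeZ, if_pos (by omega)]
  exact numRankLe_pos (by omega)

theorem three_mul_succ_mul_div_two (k : ℤ) :
    3 * (k + 1) * (k + 1 + 1) / 2 = 3 * k * (k + 1) / 2 + (3 * k + 2 + 1) := by
  rw [show 3 * (k + 1) * (k + 1 + 1) = 3 * k * (k + 1) + (3 * k + 3) * 2 by ring,
    Int.add_mul_ediv_right _ _ two_ne_zero]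
  ring

theorem sum_sub_gePart (n k : ℕ) :
    (∑ j ∈ Icc 1 k, (-1 : ℤ) ^ (j - 1) * (pz ((n : ℤ) - (3 * j * (j + 1)) / 2) : ℤ)) -
        gePart n =
      (-1) ^ (k + 1) * numRankLeZ (3 * k + 2) ((n : ℤ) - 3 * k * (k + 1) / 2) := by
  induction k with
  | zero => simp [gePart_eq_numRankLeZ]
  | succ k ih =>
    rw [sum_Icc_succ_top (by omega), add_sub_right_comm, ih,
      numRankLeZ_eq_pz_sub (by omega)]
    push_cast
    rw [three_mul_succ_mul_div_two, show 3 * (k + 1) + 2 = 3 * k + 2 + 3 by ring, sub_sub]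
    ring

theorem stmt16 (n k : ℕ) (hk : 1 ≤ k) :
    0 ≤ (-1 : ℤ) ^ (k - 1) *
      ((∑ j ∈ Icc 1 k, (-1 : ℤ) ^ (j - 1) * (pz ((n : ℤ) - (3 * j * (j + 1)) / 2) : ℤ)) -
        (gePart n : ℤ)) ∧
    (n ≥ 3 * (k + 1) * (k + 2) / 2 →
      0 < (-1 : ℤ) ^ (k - 1) *
        ((∑ j ∈ Icc 1 k, (-1 : ℤ) ^ (j - 1) * (pz ((n : ℤ) - (3 * j * (j + 1)) / 2) : ℤ)) -
          (gePart n : ℤ))) := by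
  have hsign : (-1 : ℤ) ^ (k - 1) * (-1) ^ (k + 1) = 1 := by
    rw [← pow_add]
    exact Even.neg_one_pow ⟨k, by omega⟩
  rw [sum_sub_gePart, ← mul_assoc, hsign, one_mul]
  refine ⟨Int.natCast_nonneg _, fun hn => Int.natCast_pos.mpr (numRankLeZ_pos ?_)⟩
  zify at hn
  rw [show (k : ℤ) + 2 = k + 1 + 1 by ring, three_mul_succ_mul_div_two] at hn
  omega
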